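/- arXiv:2308.11464 — 3 statements merged into one kernel-verified Lean document; each statement's English description precedes it below -/
import Mathlib

section
/- Let m and n be finite index types and let G₀, G_k be real m×n matrices with G₀ ≠ 0. Set a = trace(G₀ᵀG₀) and b = trace(G₀ᵀG_k), and define G_opt = G_k if b ≥ 0, and G_opt = G_k − (b/a)·G₀ if b < 0. Then trace(G_optᵀG₀) ≥ 0, and for every real m×n matrix G with trace(GᵀG₀) ≥ 0 one has trace((G_k − G_opt)ᵀ(G_k − G_opt)) ≤ trace((G_k − G)ᵀ(G_k − G)), i.e. ‖G_k − G_opt‖_F ≤ ‖G_k − G‖_F. -/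
/-!
`G_opt` is the nearest-point projection of `G_k` onto the half-space `{G | ⟪G, G₀⟫ ≥ 0}` for the
Frobenius inner product `⟪A, B⟫ = trace (Aᵀ B)`, i.e. the Euclidean inner product of the flattened
matrices. If `b = ⟪G₀, G_k⟫ ≥ 0` then `G_k` lies in the half-space. Otherwise every `G` in it has
`⟪G_k - G, G₀⟫ ≤ b < 0`, so Cauchy–Schwarz gives `‖G_k - G‖ ≥ |b| / ‖G₀‖ = ‖(b / a) • G₀‖`.
-/

open Matrix

open scoped RealInnerProductSpace

section HalfSpace

variable {E : Type*} [NormedAddCommGroup E] [InnerProductSpace ℝ E]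

noncomputable def halfSpaceProj (u y : E) : E :=
  if 0 ≤ ⟪u, y⟫ then y else y - (⟪u, y⟫ / ‖u‖ ^ 2) • u

theorem inner_halfSpaceProj_nonneg (u y : E) : 0 ≤ ⟪halfSpaceProj u y, u⟫ := by
  unfold halfSpaceProj
  split_ifs with hb
  · rwa [real_inner_comm]
  · have hu : u ≠ 0 := by rintro rfl; simp at hb
    rw [inner_sub_left, real_inner_smul_left, real_inner_self_eq_norm_sq, real_inner_comm,
      div_mul_cancel₀ _ (by positivity), sub_self]

theorem norm_sub_halfSpaceProj_le (u y : E) {x : E} (hx : 0 ≤ ⟪x, u⟫) :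
    ‖y - halfSpaceProj u y‖ ≤ ‖y - x‖ := by
  unfold halfSpaceProj
  split_ifs with hb
  · simp
  · push Not at hb
    have hu : 0 < ‖u‖ := norm_pos_iff.2 (by rintro rfl; simp at hb)
    have hdist : ‖y - (y - (⟪u, y⟫ / ‖u‖ ^ 2) • u)‖ = -⟪u, y⟫ / ‖u‖ := by
      rw [sub_sub_cancel, norm_smul, Real.norm_eq_abs, abs_div, abs_of_neg hb, abs_sq]
      field_simp
    rw [hdist, div_le_iff₀ hu]
    calc -⟪u, y⟫ ≤ -⟪y - x, u⟫ := by rw [inner_sub_left, real_inner_comm u y]; linarith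
      _ ≤ |⟪y - x, u⟫| := neg_le_abs _
      _ ≤ ‖y - x‖ * ‖u‖ := abs_real_inner_le_norm _ _

end HalfSpace

section Frobenius

variable {m n : Type*}

noncomputable def matrixToEuclidean : Matrix m n ℝ ≃ₗ[ℝ] EuclideanSpace ℝ (m × n) :=
  (LinearEquiv.curry ℝ ℝ m n).symm.trans (WithLp.linearEquiv 2 ℝ (m × n → ℝ)).symm

@[simp]
theorem matrixToEuclidean_apply (A : Matrix m n ℝ) (p : m × n) :
    (matrixToEuclidean A).ofLp p = A p.1 p.2 :=
  rfl

theorem trace_transpose_mul_eq_inner [Fintype m] [Fintype n] (A B : Matrix m n ℝ) :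
    (Aᵀ * B).trace = ⟪matrixToEuclidean A, matrixToEuclidean B⟫ := by
  simp [Matrix.trace, Matrix.mul_apply, PiLp.inner_apply, Fintype.sum_prod_type,
    Finset.sum_comm (γ := n), mul_comm]

end Frobenius

theorem inco_divergence_alleviation_matrix_general
    {m n : Type*} [Fintype m] [Fintype n]
    (G₀ Gk : Matrix m n ℝ)
    (a b : ℝ) (ha : a = (G₀ᵀ * G₀).trace) (hb : b = (G₀ᵀ * Gk).trace)
    (Gopt : Matrix m n ℝ)
    (hopt : Gopt = if 0 ≤ b then Gk else Gk - (b / a) • G₀) :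
    0 ≤ (Goptᵀ * G₀).trace ∧
      ∀ G : Matrix m n ℝ, 0 ≤ (Gᵀ * G₀).trace →
        ((Gk - Gopt)ᵀ * (Gk - Gopt)).trace ≤ ((Gk - G)ᵀ * (Gk - G)).trace := by
  have hproj : matrixToEuclidean Gopt =
      halfSpaceProj (matrixToEuclidean G₀) (matrixToEuclidean Gk) := by
    rw [hopt, halfSpaceProj, hb, ha, trace_transpose_mul_eq_inner, trace_transpose_mul_eq_inner,
      real_inner_self_eq_norm_sq]
    split_ifs <;> simp
  simp only [trace_transpose_mul_eq_inner, map_sub, hproj, real_inner_self_eq_norm_sq]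
  exact ⟨inner_halfSpaceProj_nonneg _ _, fun G hG ↦
    pow_le_pow_left₀ (norm_nonneg _) (norm_sub_halfSpaceProj_le _ _ hG) 2⟩

theorem inco_divergence_alleviation_matrix
    {m n : Type*} [Fintype m] [Fintype n] [DecidableEq n]
    (G₀ Gk : Matrix m n ℝ) (hG₀ : G₀ ≠ 0)
    (a b : ℝ) (ha : a = (G₀ᵀ * G₀).trace) (hb : b = (G₀ᵀ * Gk).trace)
    (Gopt : Matrix m n ℝ)
    (hopt : Gopt = if 0 ≤ b then Gk else Gk - (b / a) • G₀) :
    0 ≤ (Goptᵀ * G₀).trace ∧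
      ∀ G : Matrix m n ℝ, 0 ≤ (Gᵀ * G₀).trace →
        ((Gk - Gopt)ᵀ * (Gk - Gopt)).trace ≤ ((Gk - G)ᵀ * (Gk - G)).trace :=
  inco_divergence_alleviation_matrix_general G₀ Gk a b ha hb Gopt hopt
end

section
/- Let H be a real inner product space, f : H → ℝ differentiable with K-Lipschitz gradient (K ≥ 0), (Ω, μ) a probability space, η ∈ ℝ, σ ≥ 0, and E a natural number. Let W₀, …, W_E : Ω → H and G₀, …, G_{E−1} : Ω → H satisfy W_{e+1}(ω) = W_e(ω) − η·G_e(ω) for all ω and all e < E, where for each e the functions ω ↦ f(W_e(ω)), ω ↦ ‖∇f(W_e(ω))‖², ω ↦ ‖G_e(ω)‖², and ω ↦ ⟪∇f(W_e(ω)), G_e(ω)⟫ are integrable. Assume for each e < E: (i) ∫ ⟪∇f(W_e(ω)), G_e(ω)⟫ dμ = ∫ ‖∇f(W_e(ω))‖² dμ, and (ii) ∫ ‖G_e(ω) − ∇f(W_e(ω))‖² dμ ≤ σ². Then ∫ f(W_E(ω)) dμ ≤ ∫ f(W₀(ω)) dμ − (η − K·η²/2)·Σ_{e=0}^{E−1}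 ∫ ‖∇f(W_e(ω))‖² dμ + (K·E·η²/2)·σ². -/
/-! Along each segment the `K`-Lipschitz gradient gives the descent inequality
`f (x + v) ≤ f x + ⟪∇f x, v⟫ + K/2 ‖v‖²`. Applied to a step `v = -η G` and integrated, unbiasedness
turns the inner product into `-η 𝔼‖∇f‖²`, and the bias-variance identity
`𝔼‖G‖² = 𝔼‖G - ∇f‖² + 𝔼‖∇f‖²` bounds the quadratic term. Summing the per-step bounds telescopes. -/

open scoped RealInnerProductSpace
open MeasureTheory Finset

section Descent

variable {H : Type*} [NormedAddCommGroup H] [InnerProductSpace ℝ H] [CompleteSpace H]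
  {f : H → ℝ} {f' : H → H} {K : ℝ}

theorem le_add_inner_add_of_lipschitz_gradient (hf : ∀ x, HasGradientAt f (f' x) x)
    (hlip : ∀ x y, ‖f' x - f' y‖ ≤ K * ‖x - y‖) (x v : H) :
    f (x + v) ≤ f x + ⟪f' x, v⟫ + K / 2 * ‖v‖ ^ 2 := by
  set φ : ℝ → ℝ := fun t => f (x + t • v) - t * ⟪f' x, v⟫ - K / 2 * ‖v‖ ^ 2 * t ^ 2
  have hφ' : ∀ t : ℝ, HasDerivAt φ (⟪f' (x + t • v) - f' x, v⟫ - K * ‖v‖ ^ 2 * t) t := by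
    intro t
    have hline : HasDerivAt (fun s : ℝ => x + s • v) v t := by
      simpa using ((hasDerivAt_id t).smul_const v).const_add x
    have hquad : HasDerivAt (fun s : ℝ => K / 2 * ‖v‖ ^ 2 * s ^ 2) (K * ‖v‖ ^ 2 * t) t :=
      ((hasDerivAt_pow 2 t).const_mul (K / 2 * ‖v‖ ^ 2)).congr_deriv (by push_cast; ring)
    exact ((((hf _).hasFDerivAt.comp_hasDerivAt t hline).sub
      ((hasDerivAt_id t).mul_const ⟪f' x, v⟫)).sub hquad).congr_deriv
        (by rw [InnerProductSpace.toDual_apply_apply, inner_sub_left, one_mul])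
  have hinner_le : ∀ t : ℝ, 0 ≤ t → ⟪f' (x + t • v) - f' x, v⟫ ≤ K * ‖v‖ ^ 2 * t := by
    intro t ht
    calc ⟪f' (x + t • v) - f' x, v⟫ ≤ ‖f' (x + t • v) - f' x‖ * ‖v‖ := real_inner_le_norm _ _
      _ ≤ K * ‖x + t • v - x‖ * ‖v‖ := by gcongr; exact hlip _ _
      _ = K * ‖v‖ ^ 2 * t := by
        rw [add_sub_cancel_left, norm_smul, Real.norm_of_nonneg ht]
        ring
  have hanti : AntitoneOn φ (Set.Icc 0 1) :=
    antitoneOn_of_hasDerivWithinAt_nonpos (convex_Icc 0 1)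
      (fun t _ => (hφ' t).continuousAt.continuousWithinAt)
      (fun t _ => (hφ' t).hasDerivWithinAt)
      (fun t ht => by
        rw [interior_Icc] at ht
        linarith [hinner_le t ht.1.le])
  have h01 := hanti (Set.left_mem_Icc.2 zero_le_one) (Set.right_mem_Icc.2 zero_le_one) zero_le_one
  norm_num [φ] at h01
  linarith

theorem sub_smul_le_of_lipschitz_gradient (hf : ∀ x, HasGradientAt f (f' x) x)
    (hlip : ∀ x y, ‖f' x - f' y‖ ≤ K * ‖x - y‖) (x g : H) (η : ℝ) :
    f (x - η • g) ≤ f x - η * ⟪f' x, g⟫ + K * η ^ 2 / 2 * ‖g‖ ^ 2 := by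
  have h := le_add_inner_add_of_lipschitz_gradient hf hlip x (-(η • g))
  rw [← sub_eq_add_neg, inner_neg_right, real_inner_smul_right, norm_neg, norm_smul, mul_pow,
    Real.norm_eq_abs, sq_abs] at h
  linarith

end Descent

section Expectation

variable {H : Type*} [NormedAddCommGroup H] [InnerProductSpace ℝ H]
  {Ω : Type*} [MeasurableSpace Ω] {μ : Measure Ω}

theorem integral_norm_sq_eq_of_integral_inner_eq {u v : Ω → H}
    (hu : Integrable (fun ω => ‖u ω‖ ^ 2) μ) (hv : Integrable (fun ω => ‖v ω‖ ^ 2) μ)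
    (huv : Integrable (fun ω => ⟪u ω, v ω⟫) μ)
    (h : ∫ ω, ⟪u ω, v ω⟫ ∂μ = ∫ ω, ‖u ω‖ ^ 2 ∂μ) :
    ∫ ω, ‖v ω‖ ^ 2 ∂μ = ∫ ω, ‖v ω - u ω‖ ^ 2 ∂μ + ∫ ω, ‖u ω‖ ^ 2 ∂μ := by
  have hexpand : ∀ ω, ‖v ω - u ω‖ ^ 2 = ‖v ω‖ ^ 2 - 2 * ⟪u ω, v ω⟫ + ‖u ω‖ ^ 2 := fun ω => by
    rw [norm_sub_sq_real, real_inner_comm]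
  have hvuv : Integrable (fun ω => ‖v ω‖ ^ 2 - 2 * ⟪u ω, v ω⟫) μ := hv.sub (huv.const_mul 2)
  simp_rw [hexpand]
  rw [integral_add hvuv hu, integral_sub hv (huv.const_mul 2), integral_const_mul, h]
  ring

variable [CompleteSpace H] {f : H → ℝ} {f' : H → H} {K : ℝ}

theorem integral_sub_smul_le_of_lipschitz_gradient (hf : ∀ x, HasGradientAt f (f' x) x)
    (hlip : ∀ x y, ‖f' x - f' y‖ ≤ K * ‖x - y‖) (η : ℝ) {w g : Ω → H}
    (hfw : Integrable (fun ω => f (w ω)) μ) (hfw' : Integrable (fun ω => f (w ω - η • g ω)) μ)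
    (hgrad : Integrable (fun ω => ‖f' (w ω)‖ ^ 2) μ) (hg : Integrable (fun ω => ‖g ω‖ ^ 2) μ)
    (hinner : Integrable (fun ω => ⟪f' (w ω), g ω⟫) μ)
    (hunbiased : ∫ ω, ⟪f' (w ω), g ω⟫ ∂μ = ∫ ω, ‖f' (w ω)‖ ^ 2 ∂μ) :
    ∫ ω, f (w ω - η • g ω) ∂μ ≤
      ∫ ω, f (w ω) ∂μ - (η - K * η ^ 2 / 2) * ∫ ω, ‖f' (w ω)‖ ^ 2 ∂μ +
        K * η ^ 2 / 2 * ∫ ω, ‖g ω - f' (w ω)‖ ^ 2 ∂μ := by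
  have hlin : Integrable (fun ω => f (w ω) - η * ⟪f' (w ω), g ω⟫) μ :=
    hfw.sub (hinner.const_mul η)
  have hquad : Integrable (fun ω => K * η ^ 2 / 2 * ‖g ω‖ ^ 2) μ := hg.const_mul _
  have hmono : ∫ ω, f (w ω - η • g ω) ∂μ ≤
      ∫ ω, f (w ω) - η * ⟪f' (w ω), g ω⟫ + K * η ^ 2 / 2 * ‖g ω‖ ^ 2 ∂μ :=
    integral_mono hfw' (hlin.add hquad)
      fun ω => sub_smul_le_of_lipschitz_gradient hf hlip (w ω) (g ω) η
  rw [integral_add hlin hquad,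
    integral_sub hfw (hinner.const_mul η), integral_const_mul, integral_const_mul, hunbiased,
    integral_norm_sq_eq_of_integral_inner_eq hgrad hg hinner hunbiased] at hmono
  linarith

end Expectation

theorem per_round_progress_general
    {H : Type*} [NormedAddCommGroup H] [InnerProductSpace ℝ H] [CompleteSpace H]
    {Ω : Type*} [MeasurableSpace Ω] (μ : Measure Ω)
    (f : H → ℝ) (f' : H → H) (K : ℝ) (hK : 0 ≤ K)
    (hdiff : ∀ x : H, HasGradientAt f (f' x) x)
    (hlip : ∀ x y : H, ‖f' x - f' y‖ ≤ K * ‖x - y‖)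
    (η σ : ℝ) (E : ℕ)
    (W : ℕ → Ω → H) (G : ℕ → Ω → H)
    (hstep : ∀ ω : Ω, ∀ e < E, W (e + 1) ω = W e ω - η • G e ω)
    (hf_int : ∀ e ≤ E, Integrable (fun ω => f (W e ω)) μ)
    (hgrad_int : ∀ e < E, Integrable (fun ω => ‖f' (W e ω)‖ ^ 2) μ)
    (hG_int : ∀ e < E, Integrable (fun ω => ‖G e ω‖ ^ 2) μ)
    (hinner_int : ∀ e < E, Integrable (fun ω => ⟪f' (W e ω), G e ω⟫) μ)
    (hunbiased : ∀ e < E,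
      ∫ ω, ⟪f' (W e ω), G e ω⟫ ∂μ = ∫ ω, ‖f' (W e ω)‖ ^ 2 ∂μ)
    (hvar : ∀ e < E, ∫ ω, ‖G e ω - f' (W e ω)‖ ^ 2 ∂μ ≤ σ ^ 2) :
    ∫ ω, f (W E ω) ∂μ ≤
      ∫ ω, f (W 0 ω) ∂μ -
        (η - K * η ^ 2 / 2) * ∑ e ∈ range E, ∫ ω, ‖f' (W e ω)‖ ^ 2 ∂μ +
        (K * E * η ^ 2 / 2) * σ ^ 2 := by
  have hround : ∀ e ∈ range E, ∫ ω, f (W (e + 1) ω) ∂μ - ∫ ω, f (W e ω) ∂μ ≤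
      -(η - K * η ^ 2 / 2) * ∫ ω, ‖f' (W e ω)‖ ^ 2 ∂μ + K * η ^ 2 / 2 * σ ^ 2 := by
    intro e he
    have he : e < E := mem_range.1 he
    have hW : W (e + 1) = fun ω => W e ω - η • G e ω := funext fun ω => hstep ω e he
    have hdescent := integral_sub_smul_le_of_lipschitz_gradient hdiff hlip η (hf_int e he.le)
      (by simpa only [hW] using hf_int (e + 1) he) (hgrad_int e he) (hG_int e he)
      (hinner_int e he) (hunbiased e he)
    have hnoise := mul_le_mul_of_nonneg_left (hvar e he) (by positivity : 0 ≤ K * η ^ 2 / 2)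
    rw [hW]
    linarith
  have htotal := sum_le_sum hround
  rw [sum_range_sub (fun e => ∫ ω, f (W e ω) ∂μ), sum_add_distrib, ← mul_sum, sum_const,
    card_range, nsmul_eq_mul] at htotal
  linarith

theorem per_round_progress
    {H : Type*} [NormedAddCommGroup H] [InnerProductSpace ℝ H] [CompleteSpace H]
    {Ω : Type*} [MeasurableSpace Ω] (μ : Measure Ω) [IsProbabilityMeasure μ]
    (f : H → ℝ) (f' : H → H) (K : ℝ) (hK : 0 ≤ K)
    (hdiff : ∀ x : H, HasGradientAt f (f' x) x)
    (hlip : ∀ x y : H, ‖f' x - f' y‖ ≤ K * ‖x - y‖)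
    (η σ : ℝ) (hσ : 0 ≤ σ) (E : ℕ)
    (W : ℕ → Ω → H) (G : ℕ → Ω → H)
    (hstep : ∀ ω : Ω, ∀ e < E, W (e + 1) ω = W e ω - η • G e ω)
    (hf_int : ∀ e ≤ E, Integrable (fun ω => f (W e ω)) μ)
    (hgrad_int : ∀ e < E, Integrable (fun ω => ‖f' (W e ω)‖ ^ 2) μ)
    (hG_int : ∀ e < E, Integrable (fun ω => ‖G e ω‖ ^ 2) μ)
    (hinner_int : ∀ e < E, Integrable (fun ω => ⟪f' (W e ω), G e ω⟫) μ)
    (hunbiased : ∀ e < E,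
      ∫ ω, ⟪f' (W e ω), G e ω⟫ ∂μ = ∫ ω, ‖f' (W e ω)‖ ^ 2 ∂μ)
    (hvar : ∀ e < E, ∫ ω, ‖G e ω - f' (W e ω)‖ ^ 2 ∂μ ≤ σ ^ 2) :
    ∫ ω, f (W E ω) ∂μ ≤
      ∫ ω, f (W 0 ω) ∂μ -
        (η - K * η ^ 2 / 2) * ∑ e ∈ range E, ∫ ω, ‖f' (W e ω)‖ ^ 2 ∂μ +
        (K * E * η ^ 2 / 2) * σ ^ 2 :=
  per_round_progress_general μ f f' K hK hdiff hlip η σ E W G hstep hf_int hgrad_int hG_int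
    hinner_int hunbiased hvar
end

section
/- Let K ≥ 0, η > 0, ε > 0, σ, Γ, ρ ≥ 0 and L* be real numbers, let E ≥ 1 and T ≥ 1 be natural numbers, and let a : ℕ → ℝ and S : ℕ → ℝ satisfy: S_t ≥ 0 for all t < T; a_T ≥ L*; and for all t < T, a_{t+1} ≤ a_t − (η − K·η²/2)·S_t + (K·E·η²/2)·σ² + 2η·(Γ + ρ²) + K·η²·(2ρ² + σ² + Γ). Set κ = a₀ − L* and D = (2 − K·η)·ε − 3K·η·σ² − 2·(2 + K·η)·Γ − 4·(1 + K·η)·ρ². If D > 0 and T·E·η·D ≥ 2κ, then (1/(T·E))·Σ_{t=0}^{T−1} S_t ≤ ε. -/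
/-!
Summing the per-round descent inequality telescopes the losses, so `(η - Kη²/2) · Σ S_t` is at
most `κ` plus `T` times the per-round drift. Since `E ≥ 1`, twice that drift is at most `E η`
times the noise floor `N` for which `D = (2 - Kη) ε - N`; the round budget `2κ ≤ T E η D` then
gives `η (2 - Kη) · Σ S_t ≤ T E η (2 - Kη) ε`, and `2 - Kη > 0` because `D > 0`.
-/

open Finset

theorem mul_sum_range_le_of_le_sub_mul_add {R : Type*} [Field R] [LinearOrder R]
    [IsStrictOrderedRing R] {a S : ℕ → R} {c C : R} {T : ℕ}
    (h : ∀ t < T, a (t + 1) ≤ a t - c * S t + C) :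
    c * ∑ t ∈ range T, S t ≤ a 0 - a T + T * C := by
  calc c * ∑ t ∈ range T, S t = ∑ t ∈ range T, c * S t := mul_sum _ _ _
    _ ≤ ∑ t ∈ range T, (a t - a (t + 1) + C) :=
        sum_le_sum fun t ht => by linarith [h t (mem_range.mp ht)]
    _ = a 0 - a T + T * C := by rw [sum_add_distrib, sum_range_sub']; simp

noncomputable def roundDrift (K η σ Γ ρ : ℝ) (E : ℕ) : ℝ :=
  (K * E * η ^ 2 / 2) * σ ^ 2 + 2 * η * (Γ + ρ ^ 2) + K * η ^ 2 * (2 * ρ ^ 2 + σ ^ 2 + Γ)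

def noiseFloor (K η σ Γ ρ : ℝ) : ℝ :=
  3 * K * η * σ ^ 2 + 2 * (2 + K * η) * Γ + 4 * (1 + K * η) * ρ ^ 2

theorem noiseFloor_nonneg {K η Γ : ℝ} (hK : 0 ≤ K) (hη : 0 ≤ η) (hΓ : 0 ≤ Γ) (σ ρ : ℝ) :
    0 ≤ noiseFloor K η σ Γ ρ := by
  unfold noiseFloor
  positivity

theorem two_mul_roundDrift_le {K η Γ : ℝ} {E : ℕ} (hK : 0 ≤ K) (hη : 0 ≤ η) (hΓ : 0 ≤ Γ)
    (hE : 1 ≤ E) (σ ρ : ℝ) :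
    2 * roundDrift K η σ Γ ρ E ≤ E * η * noiseFloor K η σ Γ ρ := by
  have hE' : (0 : ℝ) ≤ E - 1 := by rw [sub_nonneg]; exact_mod_cast hE
  have hKη : 0 ≤ K * η ^ 2 := by positivity
  unfold roundDrift noiseFloor
  nlinarith [mul_nonneg (mul_nonneg hKη (sq_nonneg σ)) hE', mul_nonneg (mul_nonneg hKη hΓ) hE',
    mul_nonneg (mul_nonneg hKη (sq_nonneg ρ)) hE', mul_nonneg (mul_nonneg hη hΓ) hE',
    mul_nonneg (mul_nonneg hη (sq_nonneg ρ)) hE']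

theorem nonconvex_convergence_rate_general
    (K η ε σ Γ ρ Lstar : ℝ) (hK : 0 ≤ K) (hη : 0 < η) (hε : 0 < ε)
    (hΓ : 0 ≤ Γ)
    (E T : ℕ) (hE : 1 ≤ E)
    (a S : ℕ → ℝ)
    (hlower : Lstar ≤ a T)
    (hrec : ∀ t < T,
      a (t + 1) ≤ a t - (η - K * η ^ 2 / 2) * S t + (K * E * η ^ 2 / 2) * σ ^ 2 +
        2 * η * (Γ + ρ ^ 2) + K * η ^ 2 * (2 * ρ ^ 2 + σ ^ 2 + Γ))
    (κ D : ℝ) (hκ : κ = a 0 - Lstar)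
    (hD : D = (2 - K * η) * ε - 3 * K * η * σ ^ 2 - 2 * (2 + K * η) * Γ -
      4 * (1 + K * η) * ρ ^ 2)
    (hDpos : 0 < D) (hTbig : 2 * κ ≤ (T * E : ℝ) * η * D) :
    (1 / (T * E : ℝ)) * ∑ t ∈ range T, S t ≤ ε := by
  have hD' : D = (2 - K * η) * ε - noiseFloor K η σ Γ ρ := by rw [hD, noiseFloor]; ring
  have hcurv : 0 < 2 - K * η := by
    have := noiseFloor_nonneg hK hη.le hΓ σ ρ
    exact pos_of_mul_pos_left (by linarith) hε.le
  have htel : (η - K * η ^ 2 / 2) * ∑ t ∈ range T, S t ≤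
      a 0 - a T + T * roundDrift K η σ Γ ρ E :=
    mul_sum_range_le_of_le_sub_mul_add fun t ht => by
      have := hrec t ht; unfold roundDrift; linarith
  have hdrift := mul_le_mul_of_nonneg_left (two_mul_roundDrift_le hK hη.le hΓ hE σ ρ)
    (Nat.cast_nonneg T)
  have hsum : ∑ t ∈ range T, S t ≤ ε * (T * E) := by
    refine le_of_mul_le_mul_left ?_ (mul_pos hη hcurv)
    calc η * (2 - K * η) * ∑ t ∈ range T, S t
          = 2 * ((η - K * η ^ 2 / 2) * ∑ t ∈ range T, S t) := by ring
      _ ≤ 2 * κ + T * (2 * roundDrift K η σ Γ ρ E) := by linarith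
      _ ≤ T * E * η * D + T * (E * η * noiseFloor K η σ Γ ρ) := add_le_add hTbig hdrift
      _ = η * (2 - K * η) * (ε * (T * E)) := by rw [hD']; ring
  rw [one_div_mul_eq_div]
  exact div_le_of_le_mul₀ (by positivity) hε.le hsum

theorem nonconvex_convergence_rate
    (K η ε σ Γ ρ Lstar : ℝ) (hK : 0 ≤ K) (hη : 0 < η) (hε : 0 < ε)
    (hσ : 0 ≤ σ) (hΓ : 0 ≤ Γ) (hρ : 0 ≤ ρ)
    (E T : ℕ) (hE : 1 ≤ E) (hT : 1 ≤ T)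
    (a S : ℕ → ℝ)
    (hSnonneg : ∀ t < T, 0 ≤ S t)
    (hlower : Lstar ≤ a T)
    (hrec : ∀ t < T,
      a (t + 1) ≤ a t - (η - K * η ^ 2 / 2) * S t + (K * E * η ^ 2 / 2) * σ ^ 2 +
        2 * η * (Γ + ρ ^ 2) + K * η ^ 2 * (2 * ρ ^ 2 + σ ^ 2 + Γ))
    (κ D : ℝ) (hκ : κ = a 0 - Lstar)
    (hD : D = (2 - K * η) * ε - 3 * K * η * σ ^ 2 - 2 * (2 + K * η) * Γ -
      4 * (1 + K * η) * ρ ^ 2)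
    (hDpos : 0 < D) (hTbig : 2 * κ ≤ (T * E : ℝ) * η * D) :
    (1 / (T * E : ℝ)) * ∑ t ∈ range T, S t ≤ ε :=
  nonconvex_convergence_rate_general K η ε σ Γ ρ Lstar hK hη hε hΓ E T hE a S hlower hrec κ D hκ hD
    hDpos hTbig
end
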